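/- The surface energy density θ_p satisfies θ_p(0) = 0, θ_p is nondecreasing and subadditive on [0,∞), and there exists a constant c > 0, depending only on ψ_p, such that 0 ≤ θ_p(s) ≤ min(1, c s^{2/(p+1)}) for all s ≥ 0. -/

import Mathlib

open MeasureTheory Set Filter Topology

/-- A pair of `H¹` functions on the interval `(0,T)`, described through their
absolutely continuous representatives `a`, `b` together with their
square-integrable weak derivatives `da`, `db`. -/
structure H1Pair (T : ℝ) where
  a : ℝ → ℝ
  b : ℝ → ℝ
  da : ℝ → ℝ
  db : ℝ → ℝ
  da_mem : MeasureTheory.MemLp da 2 (MeasureTheory.volume.restrict (Set.Ioo (0:ℝ) T))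
  db_mem : MeasureTheory.MemLp db 2 (MeasureTheory.volume.restrict (Set.Ioo (0:ℝ) T))
  a_ftc : ∀ x ∈ Set.Icc (0:ℝ) T, a x = a 0 + ∫ t in Set.Ioc (0:ℝ) x, da t
  b_ftc : ∀ x ∈ Set.Icc (0:ℝ) T, b x = b 0 + ∫ t in Set.Ioc (0:ℝ) x, db t

/-- Membership in the admissible class `U_s(0,T)`: `0 ≤ β ≤ 1`, `α(0)=0`, `α(T)=s`,
`β(0)=β(T)=1`. -/
def H1Pair.Admissible {T : ℝ} (s : ℝ) (P : H1Pair T) : Prop :=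
  (∀ t ∈ Set.Icc (0:ℝ) T, P.b t ∈ Set.Icc (0:ℝ) 1) ∧
  P.a 0 = 0 ∧ P.a T = s ∧ P.b 0 = 1 ∧ P.b T = 1

/-- `ψ` is an admissible damage function of order `p` with constant `κ`: it is
continuous, nondecreasing and nonnegative on `[0,1)`, vanishes exactly at `0`, and
`(1-s)^p ψ(s) → κ` as `s → 1⁻`. -/
def AdmissiblePsi (p κ : ℝ) (ψ : ℝ → ℝ) : Prop :=
  ContinuousOn ψ (Set.Ico 0 1) ∧
  MonotoneOn ψ (Set.Ico 0 1) ∧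
  (∀ x ∈ Set.Ico (0:ℝ) 1, 0 ≤ ψ x) ∧
  (∀ x ∈ Set.Ico (0:ℝ) 1, (ψ x = 0 ↔ x = 0)) ∧
  Filter.Tendsto (fun x => (1 - x) ^ p * ψ x) (nhdsWithin 1 (Set.Iio 1)) (nhds κ)

/-- The surface energy `∫₀¹ |1-β| √(ψ(β)² |α'|² + |β'|²) dt` of a pair, where at
points with `β = 1` the product `|1-β| ψ(β)` is interpreted as `+∞`; that is, the
integrand equals `+∞` wherever `β = 1` and `α' ≠ 0`. -/
noncomputable def thetaEnergy (ψ : ℝ → ℝ) (P : H1Pair 1) : ENNReal :=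
  ∫⁻ t in Set.Ioo (0:ℝ) 1,
    (if P.b t = 1 ∧ P.da t ≠ 0 then ⊤ else
      ENNReal.ofReal (|1 - P.b t| *
        Real.sqrt ((ψ (P.b t))^2 * (P.da t)^2 + (P.db t)^2)))

/-- The surface energy density `θ_p(s)`, as an extended real number. -/
noncomputable def thetaE (ψ : ℝ → ℝ) (s : ℝ) : ENNReal :=
  ⨅ (P : H1Pair 1) (_ : P.Admissible s), thetaEnergy ψ P

/-- The surface energy density `θ_p(s)`. -/
noncomputable def theta (ψ : ℝ → ℝ) (s : ℝ) : ℝ := (thetaE ψ s).toReal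

noncomputable def affE (c d : ℝ) (hc : c ≠ 0) : ℝ ≃ᵐ ℝ :=
  ((Homeomorph.mulLeft₀ c hc).trans (Homeomorph.addRight d)).toMeasurableEquiv

lemma affE_apply (c d : ℝ) (hc : c ≠ 0) (t : ℝ) : affE c d hc t = c * t + d := rfl

lemma map_affE (c d : ℝ) (hc : 0 < c) :
    Measure.map (affE c d hc.ne') volume = ENNReal.ofReal c⁻¹ • volume := by
  have : (affE c d hc.ne' : ℝ → ℝ) = (· + d) ∘ (fun t => c * t) := rfl
  rw [show ⇑(affE c d hc.ne') = (· + d) ∘ (fun t => c * t) from rfl,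
    ← Measure.map_map (by fun_prop) (by fun_prop),
    Real.map_volume_mul_left hc.ne', Measure.map_smul,
    map_add_right_eq_self volume d, abs_of_pos (inv_pos.mpr hc)]

lemma affE_preimage_Ioo (c d : ℝ) (hc : 0 < c) (A B : ℝ) :
    (affE c d hc.ne') ⁻¹' Ioo (c*A+d) (c*B+d) = Ioo A B := by
  ext t
  simp only [mem_preimage, affE_apply, mem_Ioo]
  constructor <;> rintro ⟨h1, h2⟩ <;> constructor <;> nlinarith

lemma affE_preimage_Ioc (c d : ℝ) (hc : 0 < c) (A B : ℝ) :
    (affE c d hc.ne') ⁻¹' Ioc (c*A+d) (c*B+d) = Ioc A B := by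
  ext t
  simp only [mem_preimage, affE_apply, mem_Ioc]
  constructor <;> rintro ⟨h1, h2⟩ <;> constructor <;> nlinarith

lemma map_affE_restrict (c d : ℝ) (hc : 0 < c) (S : Set ℝ) :
    Measure.map (affE c d hc.ne') (volume.restrict ((affE c d hc.ne') ⁻¹' S)) =
      ENNReal.ofReal c⁻¹ • volume.restrict S := by
  rw [← MeasurableEquiv.restrict_map, map_affE c d hc, Measure.restrict_smul]

lemma lintegral_affE (f : ℝ → ENNReal) {c : ℝ} (hc : 0 < c) (d A B : ℝ) :
    ∫⁻ t in Ioo A B, f (c*t+d) = ENNReal.ofReal c⁻¹ * ∫⁻ u in Ioo (c*A+d) (c*B+d), f u := by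
  have he := (affE c d hc.ne').measurableEmbedding
  calc ∫⁻ t in Ioo A B, f (c*t+d)
      = ∫⁻ t, f (affE c d hc.ne' t) ∂(volume.restrict ((affE c d hc.ne') ⁻¹' Ioo (c*A+d) (c*B+d))) := by
        rw [affE_preimage_Ioo c d hc]; rfl
    _ = ∫⁻ u, f u ∂(Measure.map (affE c d hc.ne') (volume.restrict ((affE c d hc.ne') ⁻¹' Ioo (c*A+d) (c*B+d)))) := (he.lintegral_map _).symm
    _ = ∫⁻ u, f u ∂(ENNReal.ofReal c⁻¹ • volume.restrict (Ioo (c*A+d) (c*B+d))) := by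
        rw [map_affE_restrict c d hc]
    _ = ENNReal.ofReal c⁻¹ * ∫⁻ u in Ioo (c*A+d) (c*B+d), f u := lintegral_smul_measure _ _

lemma integral_affE (g : ℝ → ℝ) {c : ℝ} (hc : 0 < c) (d A B : ℝ) :
    ∫ t in Ioc A B, g (c*t+d) = c⁻¹ * ∫ u in Ioc (c*A+d) (c*B+d), g u := by
  have he := (affE c d hc.ne').measurableEmbedding
  calc ∫ t in Ioc A B, g (c*t+d)
      = ∫ t, g (affE c d hc.ne' t) ∂(volume.restrict ((affE c d hc.ne') ⁻¹' Ioc (c*A+d) (c*B+d))) := by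
        rw [affE_preimage_Ioc c d hc]; rfl
    _ = ∫ u, g u ∂(Measure.map (affE c d hc.ne') (volume.restrict ((affE c d hc.ne') ⁻¹' Ioc (c*A+d) (c*B+d)))) := (he.integral_map _).symm
    _ = ∫ u, g u ∂(ENNReal.ofReal c⁻¹ • volume.restrict (Ioc (c*A+d) (c*B+d))) := by
        rw [← MeasurableEquiv.restrict_map, map_affE c d hc, Measure.restrict_smul]
    _ = c⁻¹ * ∫ u in Ioc (c*A+d) (c*B+d), g u := by
        rw [integral_smul_measure, ENNReal.toReal_ofReal (by positivity), smul_eq_mul]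

lemma memLp_affE {g : ℝ → ℝ} (hg : MemLp g 2 (volume.restrict (Ioo (0:ℝ) 1)))
    {c : ℝ} (hc : 0 < c) (hc1 : c⁻¹ ≤ 1) (d A B : ℝ)
    (hsub : Ioo (c*A+d) (c*B+d) ⊆ Ioo (0:ℝ) 1) :
    MemLp (fun t => g (c*t+d)) 2 (volume.restrict (Ioo A B)) := by
  have he := (affE c d hc.ne').measurableEmbedding
  have hmap : Measure.map (affE c d hc.ne') (volume.restrict (Ioo A B)) ≤
      volume.restrict (Ioo (0:ℝ) 1) := by
    rw [← affE_preimage_Ioo c d hc, map_affE_restrict c d hc]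
    refine Measure.le_iff.mpr fun s hs => ?_
    simp only [Measure.smul_apply, smul_eq_mul, Measure.restrict_apply hs]
    calc ENNReal.ofReal c⁻¹ * volume (s ∩ Ioo (c*A+d) (c*B+d))
        ≤ 1 * volume (s ∩ Ioo (c*A+d) (c*B+d)) := by
          gcongr; exact ENNReal.ofReal_le_one.mpr hc1
      _ ≤ volume (s ∩ Ioo (0:ℝ) 1) := by
          rw [one_mul]; exact measure_mono (inter_subset_inter_right _ hsub)
  exact (he.memLp_map_measure_iff).mp (hg.mono_measure hmap)
-- step function helpers
lemma finiteIoo : IsFiniteMeasure (volume.restrict (Ioo (0:ℝ) 1)) :=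
  ⟨by rw [Measure.restrict_apply_univ, Real.volume_Ioo]; exact ENNReal.ofReal_lt_top⟩

lemma step_int (l r c x : ℝ) :
    ∫ u in Ioc (0:ℝ) x, (Ioc l r).indicator (fun _ => c) u
      = c * max (min r x - max l 0) 0 := by
  rw [setIntegral_indicator measurableSet_Ioc, Ioc_inter_Ioc, setIntegral_const,
    Real.volume_real_Ioc, smul_eq_mul, mul_comm,
    inf_comm x r, sup_comm (0:ℝ) l]

lemma memLp_step (l r c : ℝ) :
    MemLp ((Ioc l r).indicator (fun _ => c)) 2 (volume.restrict (Ioo (0:ℝ) 1)) := by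
  haveI := finiteIoo
  exact (memLp_const c).indicator measurableSet_Ioc

/-- derivative of the `α` profile -/
noncomputable def daF (s : ℝ) : ℝ → ℝ := (Ioc (1/4:ℝ) (3/4)).indicator (fun _ => 2*s)
/-- derivative of the `β` profile -/
noncomputable def dbF (δ : ℝ) : ℝ → ℝ := fun t =>
  (Ioc (0:ℝ) (1/4)).indicator (fun _ => -(4*δ)) t + (Ioc (3/4:ℝ) 1).indicator (fun _ => 4*δ) t

lemma aF_eq (s x : ℝ) :
    ∫ u in Ioc (0:ℝ) x, daF s u = 2*s * max (min (3/4) x - 1/4) 0 := by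
  rw [daF, step_int]; norm_num

lemma bF_eq (δ x : ℝ) :
    (1 + ∫ u in Ioc (0:ℝ) x, dbF δ u)
      = 1 - 4*δ * max (min (1/4) x) 0 + 4*δ * max (min 1 x - 3/4) 0 := by
  have h1 : IntegrableOn ((Ioc (0:ℝ) (1/4)).indicator (fun _ => -(4*δ))) (Ioc 0 x) volume := by
    haveI : IsFiniteMeasure (volume.restrict (Ioc (0:ℝ) x)) :=
      ⟨by rw [Measure.restrict_apply_univ, Real.volume_Ioc]; exact ENNReal.ofReal_lt_top⟩
    exact MemLp.integrable (q := 2) (by norm_num) ((memLp_const _).indicator measurableSet_Ioc)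
  have h2 : IntegrableOn ((Ioc (3/4:ℝ) 1).indicator (fun _ => 4*δ)) (Ioc 0 x) volume := by
    haveI : IsFiniteMeasure (volume.restrict (Ioc (0:ℝ) x)) :=
      ⟨by rw [Measure.restrict_apply_univ, Real.volume_Ioc]; exact ENNReal.ofReal_lt_top⟩
    exact MemLp.integrable (q := 2) (by norm_num) ((memLp_const _).indicator measurableSet_Ioc)
  simp only [dbF]
  rw [integral_add h1 h2, step_int, step_int]
  norm_num
  ring

/-- The explicit competitor used for the upper bound. -/
noncomputable def upPair (s δ : ℝ) : H1Pair 1 where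
  a := fun x => ∫ u in Ioc (0:ℝ) x, daF s u
  b := fun x => 1 + ∫ u in Ioc (0:ℝ) x, dbF δ u
  da := daF s
  db := dbF δ
  da_mem := memLp_step _ _ _
  db_mem := (memLp_step _ _ _).add (memLp_step _ _ _)
  a_ftc := by intro x hx; simp
  b_ftc := by intro x hx; simp

lemma upPair_a (s δ x : ℝ) : (upPair s δ).a x = 2*s * max (min (3/4) x - 1/4) 0 := aF_eq s x

lemma upPair_b (s δ x : ℝ) :
    (upPair s δ).b x = 1 - 4*δ * max (min (1/4) x) 0 + 4*δ * max (min 1 x - 3/4) 0 :=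
  bF_eq δ x

lemma upPair_b_bounds {δ : ℝ} (hδ : 0 < δ) (hδ1 : δ ≤ 1) {s t : ℝ} (ht : t ∈ Icc (0:ℝ) 1) :
    1 - δ ≤ (upPair s δ).b t ∧ (upPair s δ).b t ≤ 1 := by
  rw [upPair_b]
  obtain ⟨ht0, ht1⟩ := ht
  have h0 : (0:ℝ) ≤ max (min (1/4) t) 0 := le_max_right _ _
  have h14 : max (min (1/4) t) 0 ≤ 1/4 := max_le (min_le_left _ _) (by norm_num)
  have h20 : (0:ℝ) ≤ max (min 1 t - 3/4) 0 := le_max_right _ _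
  have h21 : max (min 1 t - 3/4) 0 ≤ max (min (1/4) t) 0 := by
    rcases le_total t (1/4) with h | h
    · have hm : min 1 t - 3/4 ≤ 0 := by
        have := min_le_right 1 t; linarith
      rw [max_eq_right hm]; exact h0
    · have hm1 : min (1/4) t = 1/4 := min_eq_left h
      rw [hm1, max_eq_left (by norm_num : (0:ℝ) ≤ 1/4)]
      refine max_le ?_ (by norm_num)
      have := min_le_left 1 t
      linarith
  constructor
  · nlinarith
  · nlinarith

lemma upPair_admissible {s δ : ℝ} (hδ : 0 < δ) (hδ1 : δ ≤ 1) :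
    (upPair s δ).Admissible s := by
  refine ⟨fun t ht => ?_, ?_, ?_, ?_, ?_⟩
  · obtain ⟨h1, h2⟩ := upPair_b_bounds hδ hδ1 (s := s) ht
    exact ⟨by linarith, h2⟩
  · rw [upPair_a]; norm_num
  · rw [upPair_a]; norm_num; ring
  · rw [upPair_b]; norm_num
  · rw [upPair_b]; norm_num

lemma Ioc14_subset : Ioc (0:ℝ) (1/4) ⊆ Ioo (0:ℝ) 1 :=
  fun x hx => ⟨hx.1, lt_of_le_of_lt hx.2 (by norm_num)⟩

lemma Ioc1434_subset : Ioc (1/4:ℝ) (3/4) ⊆ Ioo (0:ℝ) 1 :=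
  fun x hx => ⟨lt_trans (by norm_num) hx.1, lt_of_le_of_lt hx.2 (by norm_num)⟩

lemma Ioc341_inter : Ioc (3/4:ℝ) 1 ∩ Ioo (0:ℝ) 1 = Ioo (3/4:ℝ) 1 := by
  ext x
  constructor
  · rintro ⟨⟨h1, _⟩, ⟨_, h4⟩⟩; exact ⟨h1, h4⟩
  · rintro ⟨h1, h2⟩; exact ⟨⟨h1, h2.le⟩, ⟨by linarith, h2⟩⟩

open intervalIntegral in
lemma upPair_energy (ψ : ℝ → ℝ) {s δ : ℝ} (hs : 0 ≤ s) (hδ : 0 < δ) (hδ1 : δ ≤ 1)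
    (hψ0 : 0 ≤ ψ (1 - δ)) :
    thetaEnergy ψ (upPair s δ) ≤ ENNReal.ofReal (δ^2 + δ*s*ψ (1-δ)) := by
  have hda : (upPair s δ).da = daF s := rfl
  have hdb : (upPair s δ).db = dbF δ := rfl
  set g1 : ℝ → ENNReal :=
    fun t => (Ioc (0:ℝ) (1/4)).indicator (fun t => ENNReal.ofReal (16*δ^2*t)) t with hg1
  set g2 : ℝ → ENNReal :=
    fun t => (Ioc (1/4:ℝ) (3/4)).indicator (fun _ => ENNReal.ofReal (2*δ*s*ψ (1-δ))) t with hg2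
  set g3 : ℝ → ENNReal :=
    fun t => (Ioc (3/4:ℝ) 1).indicator (fun t => ENNReal.ofReal (16*δ^2*(1-t))) t with hg3
  have hm1 : Measurable g1 :=
    (ENNReal.measurable_ofReal.comp (by fun_prop)).indicator measurableSet_Ioc
  have hm2 : Measurable g2 := measurable_const.indicator measurableSet_Ioc
  have hm3 : Measurable g3 :=
    (ENNReal.measurable_ofReal.comp (by fun_prop)).indicator measurableSet_Ioc
  -- pointwise bound
  have hpt : ∀ t ∈ Ioo (0:ℝ) 1,
      (if (upPair s δ).b t = 1 ∧ (upPair s δ).da t ≠ 0 then (⊤:ENNReal) else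
        ENNReal.ofReal (|1 - (upPair s δ).b t| *
          Real.sqrt ((ψ ((upPair s δ).b t))^2 * ((upPair s δ).da t)^2 + ((upPair s δ).db t)^2)))
        ≤ g1 t + g2 t + g3 t := by
    intro t ht
    obtain ⟨ht0, ht1⟩ := ht
    rcases le_or_gt t (1/4) with h14 | h14
    · -- first piece
      have htm : t ∈ Ioc (0:ℝ) (1/4) := ⟨ht0, h14⟩
      have hda0 : (upPair s δ).da t = 0 := by
        rw [hda, daF, indicator_of_notMem (fun hc : t ∈ Ioc (1/4:ℝ) (3/4) =>
          absurd hc.1 (not_lt.2 h14))]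
      have hdb0 : (upPair s δ).db t = -(4*δ) := by
        rw [hdb]
        simp only [dbF]
        rw [indicator_of_mem htm, indicator_of_notMem
          (fun hc : t ∈ Ioc (3/4:ℝ) 1 => absurd hc.1 (by linarith)), add_zero]
      have hbt : (upPair s δ).b t = 1 - 4*δ*t := by
        rw [upPair_b, min_eq_right h14, max_eq_left ht0.le, min_eq_right (le_of_lt ht1),
          max_eq_right (by linarith : t - 3/4 ≤ (0:ℝ))]
        ring
      rw [if_neg (fun hc => hc.2 hda0)]
      have hgv : g1 t + g2 t + g3 t = ENNReal.ofReal (16*δ^2*t) := by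
        rw [hg1, hg2, hg3]
        simp only
        rw [indicator_of_mem htm, indicator_of_notMem
            (fun hc : t ∈ Ioc (1/4:ℝ) (3/4) => absurd hc.1 (not_lt.2 h14)),
          indicator_of_notMem (fun hc : t ∈ Ioc (3/4:ℝ) 1 => absurd hc.1 (by linarith)),
          add_zero, add_zero]
      rw [hgv, hbt, hda0, hdb0]
      apply le_of_eq
      congr 1
      rw [show (ψ (1 - 4*δ*t))^2 * (0:ℝ)^2 + (-(4*δ))^2 = (4*δ)^2 by ring,
        Real.sqrt_sq (by positivity),
        show (1:ℝ) - (1 - 4*δ*t) = 4*δ*t by ring,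
        abs_of_nonneg (by positivity)]
      ring
    rcases le_or_gt t (3/4) with h34 | h34
    · -- middle piece
      have htm : t ∈ Ioc (1/4:ℝ) (3/4) := ⟨h14, h34⟩
      have hda2 : (upPair s δ).da t = 2*s := by
        rw [hda, daF, indicator_of_mem htm]
      have hdb0 : (upPair s δ).db t = 0 := by
        rw [hdb]
        simp only [dbF]
        rw [indicator_of_notMem (fun hc : t ∈ Ioc (0:ℝ) (1/4) => absurd hc.2 (not_le.2 h14)),
          indicator_of_notMem (fun hc : t ∈ Ioc (3/4:ℝ) 1 => absurd hc.1 (by linarith)),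
          add_zero]
      have hbt : (upPair s δ).b t = 1 - δ := by
        rw [upPair_b, min_eq_left h14.le, max_eq_left (by norm_num : (0:ℝ) ≤ 1/4),
          min_eq_right (le_of_lt ht1), max_eq_right (by linarith : t - 3/4 ≤ (0:ℝ))]
        ring
      rw [if_neg (fun hc => by rw [hbt] at hc; have := hc.1; linarith)]
      have hgv : g1 t + g2 t + g3 t = ENNReal.ofReal (2*δ*s*ψ (1-δ)) := by
        rw [hg1, hg2, hg3]
        simp only
        rw [indicator_of_mem htm, indicator_of_notMem
            (fun hc : t ∈ Ioc (0:ℝ) (1/4) => absurd hc.2 (not_le.2 h14)),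
          indicator_of_notMem (fun hc : t ∈ Ioc (3/4:ℝ) 1 => absurd hc.1 (by linarith)),
          zero_add, add_zero]
      rw [hgv, hbt, hda2, hdb0]
      apply le_of_eq
      congr 1
      rw [show (ψ (1 - δ))^2 * (2*s)^2 + (0:ℝ)^2 = (ψ (1-δ) * (2*s))^2 by ring,
        Real.sqrt_sq (by positivity),
        show (1:ℝ) - (1 - δ) = δ by ring,
        abs_of_nonneg hδ.le]
      ring
    · -- last piece
      have htm : t ∈ Ioc (3/4:ℝ) 1 := ⟨h34, ht1.le⟩
      have hda0 : (upPair s δ).da t = 0 := by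
        rw [hda, daF, indicator_of_notMem (fun hc : t ∈ Ioc (1/4:ℝ) (3/4) =>
          absurd hc.2 (not_le.2 h34))]
      have hdb0 : (upPair s δ).db t = 4*δ := by
        rw [hdb]
        simp only [dbF]
        rw [indicator_of_mem htm, indicator_of_notMem
          (fun hc : t ∈ Ioc (0:ℝ) (1/4) => absurd hc.2 (by linarith)), zero_add]
      have hbt : (upPair s δ).b t = 1 - δ + 4*δ*(t - 3/4) := by
        rw [upPair_b, min_eq_left (by linarith : (1/4:ℝ) ≤ t),
          max_eq_left (by norm_num : (0:ℝ) ≤ 1/4),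
          min_eq_right (le_of_lt ht1), max_eq_left (by linarith : (0:ℝ) ≤ t - 3/4)]
        ring
      rw [if_neg (fun hc => hc.2 hda0)]
      have hgv : g1 t + g2 t + g3 t = ENNReal.ofReal (16*δ^2*(1-t)) := by
        rw [hg1, hg2, hg3]
        simp only
        rw [indicator_of_mem htm, indicator_of_notMem
            (fun hc : t ∈ Ioc (0:ℝ) (1/4) => absurd hc.2 (by linarith)),
          indicator_of_notMem (fun hc : t ∈ Ioc (1/4:ℝ) (3/4) => absurd hc.2 (not_le.2 h34)),
          zero_add, zero_add]
      rw [hgv, hbt, hda0, hdb0]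
      apply le_of_eq
      congr 1
      rw [show (ψ (1 - δ + 4*δ*(t - 3/4)))^2 * (0:ℝ)^2 + (4*δ)^2 = (4*δ)^2 by ring,
        Real.sqrt_sq (by positivity),
        show (1:ℝ) - (1 - δ + 4*δ*(t - 3/4)) = 4*δ*(1-t) by ring,
        abs_of_nonneg (mul_nonneg (by positivity) (by linarith))]
      ring
  have hle : thetaEnergy ψ (upPair s δ) ≤ ∫⁻ t in Ioo (0:ℝ) 1, (g1 t + g2 t + g3 t) := by
    refine setLIntegral_mono (by exact ((hm1.add hm2).add hm3)) hpt
  refine le_trans hle ?_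
  -- compute the three integrals
  have hI : ∫⁻ t in Ioo (0:ℝ) 1, (g1 t + g2 t + g3 t)
      = (∫⁻ t in Ioo (0:ℝ) 1, g1 t) + (∫⁻ t in Ioo (0:ℝ) 1, g2 t)
        + (∫⁻ t in Ioo (0:ℝ) 1, g3 t) := by
    rw [lintegral_add_right _ hm3, lintegral_add_right _ hm2]
  rw [hI]
  have hI1 : ∫⁻ t in Ioo (0:ℝ) 1, g1 t = ENNReal.ofReal (δ^2/2) := by
    rw [hg1]
    rw [lintegral_indicator measurableSet_Ioc, Measure.restrict_restrict measurableSet_Ioc,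
      Set.inter_eq_self_of_subset_left Ioc14_subset]
    have hint : IntegrableOn (fun t => 16*δ^2*t) (Ioc (0:ℝ) (1/4)) volume :=
      ((by fun_prop : Continuous fun t : ℝ => 16*δ^2*t).integrableOn_Icc).mono_set
        Ioc_subset_Icc_self
    rw [← ofReal_integral_eq_lintegral_ofReal hint
      ((ae_restrict_iff' measurableSet_Ioc).mpr (ae_of_all _ fun t ht =>
        mul_nonneg (by positivity) ht.1.le))]
    congr 1
    rw [← integral_of_le (by norm_num : (0:ℝ) ≤ 1/4),
      intervalIntegral.integral_const_mul, integral_id]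
    norm_num
    ring
  have hI2 : ∫⁻ t in Ioo (0:ℝ) 1, g2 t = ENNReal.ofReal (δ*s*ψ (1-δ)) := by
    rw [hg2]
    rw [lintegral_indicator measurableSet_Ioc, Measure.restrict_restrict measurableSet_Ioc,
      Set.inter_eq_self_of_subset_left Ioc1434_subset, setLIntegral_const, Real.volume_Ioc,
      ← ENNReal.ofReal_mul (by positivity)]
    congr 1
    norm_num
    ring
  have hI3 : ∫⁻ t in Ioo (0:ℝ) 1, g3 t = ENNReal.ofReal (δ^2/2) := by
    rw [hg3]
    rw [lintegral_indicator measurableSet_Ioc, Measure.restrict_restrict measurableSet_Ioc,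
      Ioc341_inter]
    have hint : IntegrableOn (fun t => 16*δ^2*(1-t)) (Ioo (3/4:ℝ) 1) volume :=
      ((by fun_prop : Continuous fun t : ℝ => 16*δ^2*(1-t)).integrableOn_Icc).mono_set
        Ioo_subset_Icc_self
    rw [← ofReal_integral_eq_lintegral_ofReal hint
      ((ae_restrict_iff' measurableSet_Ioo).mpr (ae_of_all _ fun t ht =>
        mul_nonneg (by positivity) (by linarith [ht.2])))]
    congr 1
    rw [← integral_Ioc_eq_integral_Ioo,
      ← integral_of_le (by norm_num : (3/4:ℝ) ≤ 1),
      intervalIntegral.integral_const_mul,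
      integral_sub intervalIntegrable_const intervalIntegrable_id,
      intervalIntegral.integral_const, integral_id]
    norm_num
    ring
  rw [hI1, hI2, hI3, ← ENNReal.ofReal_add (by positivity) (by positivity),
    ← ENNReal.ofReal_add (by positivity) (by positivity)]
  apply ENNReal.ofReal_le_ofReal
  nlinarith [mul_nonneg (mul_nonneg hδ.le hs) hψ0]

lemma thetaE_le_up (ψ : ℝ → ℝ) {s δ : ℝ} (hs : 0 ≤ s) (hδ : 0 < δ) (hδ1 : δ ≤ 1)
    (hψ0 : 0 ≤ ψ (1 - δ)) :
    thetaE ψ s ≤ ENNReal.ofReal (δ^2 + δ*s*ψ (1-δ)) :=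
  le_trans (iInf₂_le (upPair s δ) (upPair_admissible hδ hδ1))
    (upPair_energy ψ hs hδ hδ1 hψ0)

/-- The trivial competitor for `s = 0`. -/
noncomputable def zeroPair : H1Pair 1 where
  a := fun _ => 0
  b := fun _ => 1
  da := fun _ => 0
  db := fun _ => 0
  da_mem := by haveI := finiteIoo; exact memLp_const 0
  db_mem := by haveI := finiteIoo; exact memLp_const 0
  a_ftc := by intro x hx; simp
  b_ftc := by intro x hx; simp

lemma thetaE_zero (ψ : ℝ → ℝ) : thetaE ψ 0 = 0 := by
  refine le_antisymm ?_ zero_le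
  refine le_trans (iInf₂_le zeroPair ?_) ?_
  · exact ⟨fun t _ => by simp [zeroPair], by simp [zeroPair], by simp [zeroPair],
      by simp [zeroPair], by simp [zeroPair]⟩
  · simp only [thetaEnergy, zeroPair]
    simp

/-- Rescaling the `α` component. -/
noncomputable def scalePair (P : H1Pair 1) (l : ℝ) : H1Pair 1 where
  a := fun t => l * P.a t
  b := P.b
  da := fun t => l * P.da t
  db := P.db
  da_mem := P.da_mem.const_mul l
  db_mem := P.db_mem
  a_ftc := by
    intro x hx
    show l * P.a x = l * P.a 0 + _
    rw [integral_const_mul, P.a_ftc x hx]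
    ring
  b_ftc := P.b_ftc

lemma scalePair_energy (ψ : ℝ → ℝ) (P : H1Pair 1) {l : ℝ} (hl0 : 0 ≤ l) (hl1 : l ≤ 1) :
    thetaEnergy ψ (scalePair P l) ≤ thetaEnergy ψ P := by
  refine lintegral_mono fun t => ?_
  by_cases hcond : P.b t = 1 ∧ P.da t ≠ 0
  · rw [if_pos hcond]; exact le_top
  · have hsp_b : (scalePair P l).b t = P.b t := rfl
    have hsp_da : (scalePair P l).da t = l * P.da t := rfl
    have hsp_db : (scalePair P l).db t = P.db t := rfl
    rw [hsp_b, hsp_da, hsp_db, if_neg hcond,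
      if_neg (fun hc => hcond ⟨hc.1, fun h0 => hc.2 (by rw [h0, mul_zero])⟩)]
    apply ENNReal.ofReal_le_ofReal
    apply mul_le_mul_of_nonneg_left _ (abs_nonneg _)
    apply Real.sqrt_le_sqrt
    have : (l * P.da t)^2 ≤ (P.da t)^2 := by
      nlinarith [mul_nonneg (by nlinarith : (0:ℝ) ≤ 1 - l^2) (sq_nonneg (P.da t))]
    nlinarith [sq_nonneg (ψ (P.b t))]

lemma thetaE_mono (ψ : ℝ → ℝ) {s₁ s₂ : ℝ} (h1 : 0 ≤ s₁) (h12 : s₁ ≤ s₂) :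
    thetaE ψ s₁ ≤ thetaE ψ s₂ := by
  rcases eq_or_lt_of_le (h1.trans h12) with h2 | h2
  · have : s₁ = s₂ := le_antisymm h12 (by linarith)
    rw [this]
  · refine le_iInf₂ fun P hP => ?_
    set l := s₁ / s₂ with hl
    have hl0 : 0 ≤ l := div_nonneg h1 h2.le
    have hl1 : l ≤ 1 := (div_le_one h2).mpr h12
    refine le_trans (iInf₂_le (scalePair P l) ?_) (scalePair_energy ψ P hl0 hl1)
    obtain ⟨hb, ha0, haT, hb0, hbT⟩ := hP
    exact ⟨hb, by show l * P.a 0 = 0; rw [ha0, mul_zero],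
      by show l * P.a 1 = s₁; rw [haT, hl, div_mul_cancel₀ _ h2.ne'], hb0, hbT⟩

lemma memLp_affE_Ioc {g : ℝ → ℝ} (hg : MemLp g 2 (volume.restrict (Ioo (0:ℝ) 1)))
    {c : ℝ} (hc : 0 < c) (hc1 : c⁻¹ ≤ 1) (d A B : ℝ)
    (hsub : Ioo (c*A+d) (c*B+d) ⊆ Ioo (0:ℝ) 1) :
    MemLp (fun t => g (c*t+d)) 2 (volume.restrict (Ioc A B)) := by
  rw [Measure.restrict_congr_set (Ioo_ae_eq_Ioc (μ := volume) (a := A) (b := B)).symm]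
  exact memLp_affE hg hc hc1 d A B hsub

lemma integral_twoMul (g : ℝ → ℝ) (A B : ℝ) :
    ∫ t in Ioc A B, 2 * g (2*t) = ∫ u in Ioc (2*A) (2*B), g u := by
  rw [integral_const_mul]
  have h := integral_affE g two_pos 0 A B
  simp only [add_zero] at h
  rw [h, ← mul_assoc]
  norm_num

lemma integral_twoSub (g : ℝ → ℝ) (A B : ℝ) :
    ∫ t in Ioc A B, 2 * g (2*t - 1) = ∫ u in Ioc (2*A - 1) (2*B - 1), g u := by
  rw [integral_const_mul]
  have h := integral_affE g two_pos (-1) A B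
  simp only [← sub_eq_add_neg] at h
  rw [h, ← mul_assoc]
  norm_num

lemma lintegral_half₁ (f : ℝ → ENNReal) :
    ∫⁻ t in Ioo (0:ℝ) (1/2), f (2*t) = ENNReal.ofReal 2⁻¹ * ∫⁻ u in Ioo (0:ℝ) 1, f u := by
  have h := lintegral_affE f two_pos 0 0 (1/2)
  norm_num at h
  convert h using 2 <;> norm_num

lemma lintegral_half₂ (f : ℝ → ENNReal) :
    ∫⁻ t in Ioo (1/2:ℝ) 1, f (2*t - 1) = ENNReal.ofReal 2⁻¹ * ∫⁻ u in Ioo (0:ℝ) 1, f u := by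
  have h := lintegral_affE f two_pos (-1) (1/2) 1
  simp only [← sub_eq_add_neg] at h
  norm_num at h
  convert h using 2 <;> norm_num

lemma cat_int₁ {g₁ : ℝ → ℝ} (hg₁ : MemLp g₁ 2 (volume.restrict (Ioo (0:ℝ) 1))) :
    IntegrableOn (fun t => 2 * g₁ (2*t)) (Ioc (0:ℝ) (1/2)) volume := by
  haveI : IsFiniteMeasure (volume.restrict (Ioc (0:ℝ) (1/2))) :=
    ⟨by rw [Measure.restrict_apply_univ, Real.volume_Ioc]; exact ENNReal.ofReal_lt_top⟩
  have h := (memLp_affE_Ioc hg₁ two_pos (by norm_num) 0 0 (1/2)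
    (by norm_num)).const_mul 2
  exact MemLp.integrable (q := 2) (by norm_num) (by simpa using h)

lemma cat_int₂ {g₂ : ℝ → ℝ} (hg₂ : MemLp g₂ 2 (volume.restrict (Ioo (0:ℝ) 1)))
    {x : ℝ} (hx : x ≤ 1) :
    IntegrableOn (fun t => 2 * g₂ (2*t - 1)) (Ioc (1/2:ℝ) x) volume := by
  haveI : IsFiniteMeasure (volume.restrict (Ioc (1/2:ℝ) x)) :=
    ⟨by rw [Measure.restrict_apply_univ, Real.volume_Ioc]; exact ENNReal.ofReal_lt_top⟩
  have h := (memLp_affE_Ioc hg₂ two_pos (by norm_num) (-1) (1/2) x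
    (fun u hu => by
      simp only [mem_Ioo] at hu ⊢
      constructor
      · linarith [hu.1]
      · have := hu.2; linarith)).const_mul 2
  refine MemLp.integrable (q := 2) (by norm_num) ?_
  refine h.ae_eq (ae_of_all _ fun t => by norm_num [sub_eq_add_neg])

lemma cat_ftc (f₁ f₂ g₁ g₂ : ℝ → ℝ)
    (hg₁ : MemLp g₁ 2 (volume.restrict (Ioo (0:ℝ) 1)))
    (hg₂ : MemLp g₂ 2 (volume.restrict (Ioo (0:ℝ) 1)))
    (ftc₁ : ∀ x ∈ Icc (0:ℝ) 1, f₁ x = f₁ 0 + ∫ t in Ioc (0:ℝ) x, g₁ t)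
    (ftc₂ : ∀ x ∈ Icc (0:ℝ) 1, f₂ x = f₂ 0 + ∫ t in Ioc (0:ℝ) x, g₂ t)
    (hcont : f₂ 0 = f₁ 1) :
    ∀ x ∈ Icc (0:ℝ) 1,
      (if x ≤ 1/2 then f₁ (2*x) else f₂ (2*x - 1))
        = (if (0:ℝ) ≤ 1/2 then f₁ (2*0) else f₂ (2*0 - 1))
          + ∫ t in Ioc (0:ℝ) x, (if t ≤ 1/2 then 2 * g₁ (2*t) else 2 * g₂ (2*t - 1)) := by
  intro x hx
  obtain ⟨hx0, hx1⟩ := hx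
  rw [if_pos (by norm_num : (0:ℝ) ≤ 1/2), mul_zero]
  rcases le_or_gt x (1/2) with h | h
  · rw [if_pos h,
      setIntegral_congr_fun measurableSet_Ioc
        (fun t ht => if_pos (le_trans ht.2 h) :
          EqOn (fun t => if t ≤ 1/2 then 2 * g₁ (2*t) else 2 * g₂ (2*t - 1))
            (fun t => 2 * g₁ (2*t)) (Ioc 0 x)),
      integral_twoMul, mul_zero]
    exact ftc₁ (2*x) ⟨by linarith, by linarith⟩
  · rw [if_neg (not_le.2 h),
      ← Ioc_union_Ioc_eq_Ioc (by norm_num : (0:ℝ) ≤ 1/2) h.le,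
      setIntegral_union (Ioc_disjoint_Ioc_of_le le_rfl) measurableSet_Ioc
        ((cat_int₁ hg₁).congr_fun
          (fun t ht => (if_pos (le_trans ht.2 (le_refl (1/2:ℝ)))).symm :
            EqOn (fun t => 2 * g₁ (2*t))
              (fun t => if t ≤ 1/2 then 2 * g₁ (2*t) else 2 * g₂ (2*t - 1)) (Ioc 0 (1/2)))
          measurableSet_Ioc)
        ((cat_int₂ hg₂ hx1).congr_fun
          (fun t ht => (if_neg (not_le.2 ht.1)).symm :
            EqOn (fun t => 2 * g₂ (2*t - 1))
              (fun t => if t ≤ 1/2 then 2 * g₁ (2*t) else 2 * g₂ (2*t - 1)) (Ioc (1/2) x))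
          measurableSet_Ioc)]
    rw [setIntegral_congr_fun measurableSet_Ioc
        (fun t ht => if_pos ht.2 :
          EqOn (fun t => if t ≤ 1/2 then 2 * g₁ (2*t) else 2 * g₂ (2*t - 1))
            (fun t => 2 * g₁ (2*t)) (Ioc 0 (1/2))),
      setIntegral_congr_fun measurableSet_Ioc
        (fun t ht => if_neg (not_le.2 ht.1) :
          EqOn (fun t => if t ≤ 1/2 then 2 * g₁ (2*t) else 2 * g₂ (2*t - 1))
            (fun t => 2 * g₂ (2*t - 1)) (Ioc (1/2) x)),
      integral_twoMul, integral_twoSub]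
    have e₁ := ftc₁ 1 ⟨by norm_num, le_refl 1⟩
    have e₂ := ftc₂ (2*x - 1) ⟨by linarith, by linarith⟩
    have h20 : (2:ℝ) * 0 = 0 := by norm_num
    have h21 : (2:ℝ) * (1/2) = 1 := by norm_num
    rw [h20, h21, show (1:ℝ) - 1 = 0 by norm_num]
    rw [e₂]
    rw [hcont, e₁]
    ring

lemma if_piece (c : ℝ) (f g : ℝ → ℝ) :
    (fun t => if t ≤ c then f t else g t)
      = fun t => (Iic c).indicator f t + (Ioi c).indicator g t := by
  funext t
  by_cases h : t ≤ c
  · simp [Set.indicator_apply, h, not_lt.2 h]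
  · simp [Set.indicator_apply, h, not_le.1 h]

lemma Iic_inter_Ioo : Iic (1/2:ℝ) ∩ Ioo 0 1 = Ioc 0 (1/2) := by
  ext u
  simp only [mem_inter_iff, mem_Iic, mem_Ioo, mem_Ioc]
  constructor
  · rintro ⟨h, h0, h1⟩; exact ⟨h0, h⟩
  · rintro ⟨h0, h⟩; exact ⟨h, h0, lt_of_le_of_lt h (by norm_num)⟩

lemma Ioi_inter_Ioo : Ioi (1/2:ℝ) ∩ Ioo 0 1 = Ioo (1/2) 1 := by
  ext u
  simp only [mem_inter_iff, mem_Ioi, mem_Ioo]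
  constructor
  · rintro ⟨h, _, h1⟩; exact ⟨h, h1⟩
  · rintro ⟨h, h1⟩; exact ⟨h, lt_trans (by norm_num) h, h1⟩

lemma cat_memLp {g₁ g₂ : ℝ → ℝ} (h₁ : MemLp g₁ 2 (volume.restrict (Ioo (0:ℝ) 1)))
    (h₂ : MemLp g₂ 2 (volume.restrict (Ioo (0:ℝ) 1))) :
    MemLp (fun t => if t ≤ 1/2 then 2 * g₁ (2*t) else 2 * g₂ (2*t - 1)) 2
      (volume.restrict (Ioo (0:ℝ) 1)) := by
  rw [if_piece]
  have e₁ : MemLp (fun t => 2 * g₁ (2*t)) 2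
      ((volume.restrict (Ioo (0:ℝ) 1)).restrict (Iic (1/2))) := by
    rw [Measure.restrict_restrict measurableSet_Iic, Iic_inter_Ioo,
      Measure.restrict_congr_set (Ioo_ae_eq_Ioc (μ := volume)).symm]
    simpa using (memLp_affE h₁ two_pos (by norm_num) 0 0 (1/2) (by norm_num)).const_mul 2
  have e₂ : MemLp (fun t => 2 * g₂ (2*t - 1)) 2
      ((volume.restrict (Ioo (0:ℝ) 1)).restrict (Ioi (1/2))) := by
    rw [Measure.restrict_restrict measurableSet_Ioi, Ioi_inter_Ioo]
    have h := (memLp_affE h₂ two_pos (by norm_num) (-1) (1/2) 1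
      (by norm_num)).const_mul 2
    exact h.ae_eq (ae_of_all _ fun t => by norm_num [sub_eq_add_neg])
  exact ((memLp_indicator_iff_restrict measurableSet_Iic).mpr e₁).add
    ((memLp_indicator_iff_restrict measurableSet_Ioi).mpr e₂)

/-- Concatenation of two admissible pairs. -/
noncomputable def catPair (P₁ P₂ : H1Pair 1) (s₁ : ℝ) (h11 : P₁.a 1 = s₁)
    (h20 : P₂.a 0 = 0) (hb1 : P₁.b 1 = P₂.b 0) : H1Pair 1 where
  a := fun t => if t ≤ 1/2 then P₁.a (2*t) else s₁ + P₂.a (2*t - 1)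
  b := fun t => if t ≤ 1/2 then P₁.b (2*t) else P₂.b (2*t - 1)
  da := fun t => if t ≤ 1/2 then 2 * P₁.da (2*t) else 2 * P₂.da (2*t - 1)
  db := fun t => if t ≤ 1/2 then 2 * P₁.db (2*t) else 2 * P₂.db (2*t - 1)
  da_mem := cat_memLp P₁.da_mem P₂.da_mem
  db_mem := cat_memLp P₁.db_mem P₂.db_mem
  a_ftc :=
    cat_ftc P₁.a (fun u => s₁ + P₂.a u) P₁.da P₂.da P₁.da_mem P₂.da_mem P₁.a_ftc
      (fun x hx => by show s₁ + P₂.a x = s₁ + P₂.a 0 + _; rw [P₂.a_ftc x hx]; ring) (by simp [h20, h11])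
  b_ftc := cat_ftc P₁.b P₂.b P₁.db P₂.db P₁.db_mem P₂.db_mem P₁.b_ftc P₂.b_ftc hb1.symm

lemma catPair_admissible {P₁ P₂ : H1Pair 1} {s₁ s₂ : ℝ}
    (hP₁ : P₁.Admissible s₁) (hP₂ : P₂.Admissible s₂)
    (h11 : P₁.a 1 = s₁) (h20 : P₂.a 0 = 0) (hb1 : P₁.b 1 = P₂.b 0) :
    (catPair P₁ P₂ s₁ h11 h20 hb1).Admissible (s₁ + s₂) := by
  obtain ⟨hb₁, ha₁0, ha₁1, hb₁0, hb₁1⟩ := hP₁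
  obtain ⟨hb₂, ha₂0, ha₂1, hb₂0, hb₂1⟩ := hP₂
  refine ⟨fun t ht => ?_, ?_, ?_, ?_, ?_⟩
  · obtain ⟨ht0, ht1⟩ := ht
    show (if t ≤ 1/2 then P₁.b (2*t) else P₂.b (2*t - 1)) ∈ Icc (0:ℝ) 1
    rcases le_or_gt t (1/2) with h | h
    · rw [if_pos h]; exact hb₁ (2*t) ⟨by linarith, by linarith⟩
    · rw [if_neg (not_le.2 h)]; exact hb₂ (2*t - 1) ⟨by linarith, by linarith⟩
  · show (if (0:ℝ) ≤ 1/2 then P₁.a (2*0) else _) = 0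
    rw [if_pos (by norm_num : (0:ℝ) ≤ 1/2), mul_zero]; exact ha₁0
  · show (if (1:ℝ) ≤ 1/2 then _ else s₁ + P₂.a (2*1 - 1)) = s₁ + s₂
    rw [if_neg (by norm_num : ¬(1:ℝ) ≤ 1/2), show (2:ℝ)*1 - 1 = 1 by norm_num, ha₂1]
  · show (if (0:ℝ) ≤ 1/2 then P₁.b (2*0) else _) = 1
    rw [if_pos (by norm_num : (0:ℝ) ≤ 1/2), mul_zero]; exact hb₁0
  · show (if (1:ℝ) ≤ 1/2 then _ else P₂.b (2*1 - 1)) = 1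
    rw [if_neg (by norm_num : ¬(1:ℝ) ≤ 1/2), show (2:ℝ)*1 - 1 = 1 by norm_num]; exact hb₂1

lemma sqrt_four : Real.sqrt 4 = 2 := by
  rw [show (4:ℝ) = 2^2 by norm_num, Real.sqrt_sq (by norm_num : (0:ℝ) ≤ 2)]

lemma two_mul_ofReal_half : (2:ENNReal) * ENNReal.ofReal 2⁻¹ = 1 := by
  rw [ENNReal.ofReal_inv_of_pos (by norm_num : (0:ℝ) < 2)]
  rw [show ENNReal.ofReal 2 = 2 by norm_num]
  exact ENNReal.mul_inv_cancel (by norm_num) (by norm_num)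

lemma split_Ioo_ae : Ioo (0:ℝ) 1 =ᵐ[volume] ((Ioo (0:ℝ) (1/2) ∪ Ioo (1/2:ℝ) 1 : Set ℝ)) := by
  have hsub : Ioo (0:ℝ) (1/2) ∪ Ioo (1/2:ℝ) 1 ⊆ Ioo (0:ℝ) 1 :=
    union_subset (fun u hu => ⟨hu.1, by have := hu.2; linarith⟩)
      (fun u hu => ⟨by have := hu.1; linarith, hu.2⟩)
  refine (ae_eq_set.mpr ⟨?_, ?_⟩)
  · refine measure_mono_null (fun u hu => ?_) (Real.volume_singleton : volume {(1/2:ℝ)} = 0)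
    obtain ⟨⟨h0, h1⟩, hn⟩ := hu
    have h2 : ¬ u < 1/2 := fun hc => hn (Or.inl ⟨h0, hc⟩)
    have h3 : ¬ 1/2 < u := fun hc => hn (Or.inr ⟨hc, h1⟩)
    exact mem_singleton_iff.mpr (le_antisymm (not_lt.1 h3) (not_lt.1 h2))
  · rw [diff_eq_empty.mpr hsub]; exact measure_empty

lemma catPair_energy (ψ : ℝ → ℝ) (P₁ P₂ : H1Pair 1) (s₁ : ℝ) (h11 : P₁.a 1 = s₁)
    (h20 : P₂.a 0 = 0) (hb1 : P₁.b 1 = P₂.b 0) :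
    thetaEnergy ψ (catPair P₁ P₂ s₁ h11 h20 hb1)
      ≤ thetaEnergy ψ P₁ + thetaEnergy ψ P₂ := by
  set Q := catPair P₁ P₂ s₁ h11 h20 hb1 with hQdef
  set F : ℝ → ENNReal := fun u => if P₁.b u = 1 ∧ P₁.da u ≠ 0 then ⊤ else
    ENNReal.ofReal (|1 - P₁.b u| *
      Real.sqrt ((ψ (P₁.b u))^2 * (P₁.da u)^2 + (P₁.db u)^2)) with hF
  set G : ℝ → ENNReal := fun u => if P₂.b u = 1 ∧ P₂.da u ≠ 0 then ⊤ else
    ENNReal.ofReal (|1 - P₂.b u| *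
      Real.sqrt ((ψ (P₂.b u))^2 * (P₂.da u)^2 + (P₂.db u)^2)) with hG
  set Qf : ℝ → ENNReal := fun t => if Q.b t = 1 ∧ Q.da t ≠ 0 then ⊤ else
    ENNReal.ofReal (|1 - Q.b t| *
      Real.sqrt ((ψ (Q.b t))^2 * (Q.da t)^2 + (Q.db t)^2)) with hQf
  have hpt1 : ∀ t ∈ Ioo (0:ℝ) (1/2), Qf t = 2 * F (2*t) := by
    intro t ht
    have hle : t ≤ 1/2 := ht.2.le
    have hqb : Q.b t = P₁.b (2*t) := by
      show (if t ≤ 1/2 then P₁.b (2*t) else P₂.b (2*t - 1)) = _; rw [if_pos hle]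
    have hqda : Q.da t = 2 * P₁.da (2*t) := by
      show (if t ≤ 1/2 then 2 * P₁.da (2*t) else 2 * P₂.da (2*t - 1)) = _; rw [if_pos hle]
    have hqdb : Q.db t = 2 * P₁.db (2*t) := by
      show (if t ≤ 1/2 then 2 * P₁.db (2*t) else 2 * P₂.db (2*t - 1)) = _; rw [if_pos hle]
    simp only [hQf, hF]
    rw [hqb, hqda, hqdb]
    by_cases hc : P₁.b (2*t) = 1 ∧ P₁.da (2*t) ≠ 0
    · rw [if_pos ⟨hc.1, mul_ne_zero two_ne_zero hc.2⟩, if_pos hc,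
        ENNReal.mul_top (by norm_num)]
    · rw [if_neg (fun hcon => hc ⟨hcon.1, fun h0 => hcon.2 (by rw [h0, mul_zero])⟩),
        if_neg hc,
        show (ψ (P₁.b (2*t)))^2 * (2 * P₁.da (2*t))^2 + (2 * P₁.db (2*t))^2
          = 4 * ((ψ (P₁.b (2*t)))^2 * (P₁.da (2*t))^2 + (P₁.db (2*t))^2) by ring,
        Real.sqrt_mul (by norm_num : (0:ℝ) ≤ 4), sqrt_four]
      rw [show |1 - P₁.b (2*t)| *
          (2 * Real.sqrt ((ψ (P₁.b (2*t)))^2 * (P₁.da (2*t))^2 + (P₁.db (2*t))^2))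
          = 2 * (|1 - P₁.b (2*t)| *
            Real.sqrt ((ψ (P₁.b (2*t)))^2 * (P₁.da (2*t))^2 + (P₁.db (2*t))^2)) by ring,
        ENNReal.ofReal_mul (by norm_num : (0:ℝ) ≤ 2)]
      congr 1
      norm_num
  have hpt2 : ∀ t ∈ Ioo (1/2:ℝ) 1, Qf t = 2 * G (2*t - 1) := by
    intro t ht
    have hle : ¬ t ≤ 1/2 := not_le.2 ht.1
    have hqb : Q.b t = P₂.b (2*t - 1) := by
      show (if t ≤ 1/2 then P₁.b (2*t) else P₂.b (2*t - 1)) = _; rw [if_neg hle]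
    have hqda : Q.da t = 2 * P₂.da (2*t - 1) := by
      show (if t ≤ 1/2 then 2 * P₁.da (2*t) else 2 * P₂.da (2*t - 1)) = _; rw [if_neg hle]
    have hqdb : Q.db t = 2 * P₂.db (2*t - 1) := by
      show (if t ≤ 1/2 then 2 * P₁.db (2*t) else 2 * P₂.db (2*t - 1)) = _; rw [if_neg hle]
    simp only [hQf, hG]
    rw [hqb, hqda, hqdb]
    by_cases hc : P₂.b (2*t - 1) = 1 ∧ P₂.da (2*t - 1) ≠ 0
    · rw [if_pos ⟨hc.1, mul_ne_zero two_ne_zero hc.2⟩, if_pos hc,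
        ENNReal.mul_top (by norm_num)]
    · rw [if_neg (fun hcon => hc ⟨hcon.1, fun h0 => hcon.2 (by rw [h0, mul_zero])⟩),
        if_neg hc,
        show (ψ (P₂.b (2*t - 1)))^2 * (2 * P₂.da (2*t - 1))^2 + (2 * P₂.db (2*t - 1))^2
          = 4 * ((ψ (P₂.b (2*t - 1)))^2 * (P₂.da (2*t - 1))^2 + (P₂.db (2*t - 1))^2) by ring,
        Real.sqrt_mul (by norm_num : (0:ℝ) ≤ 4), sqrt_four]
      rw [show |1 - P₂.b (2*t - 1)| *
          (2 * Real.sqrt ((ψ (P₂.b (2*t - 1)))^2 * (P₂.da (2*t - 1))^2 + (P₂.db (2*t - 1))^2))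
          = 2 * (|1 - P₂.b (2*t - 1)| *
            Real.sqrt ((ψ (P₂.b (2*t - 1)))^2 * (P₂.da (2*t - 1))^2 + (P₂.db (2*t - 1))^2)) by ring,
        ENNReal.ofReal_mul (by norm_num : (0:ℝ) ≤ 2)]
      congr 1
      norm_num
  have hdisj : Disjoint (Ioo (0:ℝ) (1/2)) (Ioo (1/2:ℝ) 1) :=
    Set.disjoint_left.mpr fun t ht ht' => absurd (ht.2.trans ht'.1) (lt_irrefl t)
  have h1 : ∫⁻ t in Ioo (0:ℝ) (1/2), Qf t = thetaEnergy ψ P₁ := by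
    rw [setLIntegral_congr_fun measurableSet_Ioo hpt1,
      lintegral_const_mul' 2 _ (by norm_num), lintegral_half₁ F, ← mul_assoc,
      two_mul_ofReal_half, one_mul]
    rfl
  have h2 : ∫⁻ t in Ioo (1/2:ℝ) 1, Qf t = thetaEnergy ψ P₂ := by
    rw [setLIntegral_congr_fun measurableSet_Ioo hpt2,
      lintegral_const_mul' 2 _ (by norm_num), lintegral_half₂ G, ← mul_assoc,
      two_mul_ofReal_half, one_mul]
    rfl
  have hE : thetaEnergy ψ Q = ∫⁻ t in Ioo (0:ℝ) 1, Qf t := rfl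
  rw [hE, setLIntegral_congr split_Ioo_ae, lintegral_union measurableSet_Ioo hdisj, h1, h2]

lemma thetaE_subadd (ψ : ℝ → ℝ) (s₁ s₂ : ℝ) :
    thetaE ψ (s₁ + s₂) ≤ thetaE ψ s₁ + thetaE ψ s₂ := by
  have key : ∀ P₁ : H1Pair 1, P₁.Admissible s₁ → ∀ P₂ : H1Pair 1, P₂.Admissible s₂ →
      thetaE ψ (s₁ + s₂) ≤ thetaEnergy ψ P₁ + thetaEnergy ψ P₂ := by
    intro P₁ h₁ P₂ h₂
    have h11 : P₁.a 1 = s₁ := h₁.2.2.1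
    have h20 : P₂.a 0 = 0 := h₂.2.1
    have hb1 : P₁.b 1 = P₂.b 0 := by rw [h₁.2.2.2.2, h₂.2.2.2.1]
    exact le_trans
      (iInf₂_le (catPair P₁ P₂ s₁ h11 h20 hb1) (catPair_admissible h₁ h₂ h11 h20 hb1))
      (catPair_energy ψ P₁ P₂ s₁ h11 h20 hb1)
  conv_rhs => rw [thetaE, thetaE]
  simp only [ENNReal.iInf_add, ENNReal.add_iInf]
  exact le_iInf fun P₂ => le_iInf fun h₂ => le_iInf fun P₁ => le_iInf fun h₁ => key P₁ h₁ P₂ h₂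

lemma psi_bound {p κ : ℝ} (hp : 1 < p) (hκ : 0 < κ) {ψ : ℝ → ℝ} (hψ : AdmissiblePsi p κ ψ) :
    ∃ C : ℝ, 0 < C ∧ ∀ δ : ℝ, 0 < δ → δ ≤ 1 → ψ (1 - δ) ≤ C / δ ^ p := by
  obtain ⟨hcont, hmono, hnn, hiff, hlim⟩ := hψ
  have hp0 : (0:ℝ) ≤ p := by linarith
  have hev : ∀ᶠ x in nhdsWithin 1 (Iio 1), (1 - x) ^ p * ψ x ≤ κ + 1 :=
    hlim.eventually (eventually_le_nhds (lt_add_one κ))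
  rw [Filter.eventually_iff, mem_nhdsLT_iff_exists_Ioo_subset] at hev
  obtain ⟨l, hl, hsub⟩ := hev
  set l' := max l 0 with hl'
  have hl'1 : l' < 1 := max_lt hl one_pos
  set δ₀ := 1 - l' with hδ₀
  have hδ₀pos : 0 < δ₀ := by simp only [hδ₀]; linarith
  have hδ₀le : δ₀ ≤ 1 := by
    have : (0:ℝ) ≤ l' := le_max_right _ _
    simp only [hδ₀]; linarith
  have hsmall : ∀ δ : ℝ, 0 < δ → δ < δ₀ → δ ^ p * ψ (1 - δ) ≤ κ + 1 := by
    intro δ h0 h1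
    have hx : (1 - δ) ∈ Ioo l 1 := by
      constructor
      · have h2 : l ≤ l' := le_max_left _ _
        simp only [hδ₀] at h1; linarith
      · linarith
    have := hsub hx
    simpa using this
  set C := (κ + 1) * (2/δ₀) ^ p with hC
  have hone : (1:ℝ) ≤ (2/δ₀) ^ p :=
    Real.one_le_rpow (by rw [le_div_iff₀ hδ₀pos]; linarith) hp0
  have hCpos : 0 < C := mul_pos (by linarith) (by linarith)
  refine ⟨C, hCpos, fun δ h0 h1 => ?_⟩
  have hδp : (0:ℝ) < δ ^ p := Real.rpow_pos_of_pos h0 p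
  rcases lt_or_ge δ δ₀ with hlt | hge
  · rw [le_div_iff₀ hδp]
    calc ψ (1 - δ) * δ ^ p = δ ^ p * ψ (1 - δ) := by ring
      _ ≤ κ + 1 := hsmall δ h0 hlt
      _ ≤ C := by rw [hC]; nlinarith
  · have hb := hsmall (δ₀/2) (by positivity) (by linarith)
    have hmem1 : (1 - δ) ∈ Ico (0:ℝ) 1 := ⟨by linarith, by linarith⟩
    have hmem2 : (1 - δ₀/2) ∈ Ico (0:ℝ) 1 := ⟨by linarith, by linarith⟩
    have hm : ψ (1 - δ) ≤ ψ (1 - δ₀/2) := hmono hmem1 hmem2 (by linarith)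
    have hδ₀p : (0:ℝ) < (δ₀/2) ^ p := Real.rpow_pos_of_pos (by positivity) p
    have hinv : ((2:ℝ)/δ₀) ^ p = ((δ₀/2) ^ p)⁻¹ := by
      rw [show (2:ℝ)/δ₀ = (δ₀/2)⁻¹ from (inv_div 2 δ₀).symm ▸ (inv_div δ₀ 2).symm,
        Real.inv_rpow (by positivity)]
    have hψ2 : ψ (1 - δ₀/2) ≤ C := by
      rw [hC, hinv, ← div_eq_mul_inv, le_div_iff₀ hδ₀p]
      calc ψ (1 - δ₀/2) * (δ₀/2) ^ p = (δ₀/2) ^ p * ψ (1 - δ₀/2) := by ring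
        _ ≤ κ + 1 := hb
    have hδ1p : δ ^ p ≤ 1 := Real.rpow_le_one h0.le h1 hp0
    rw [le_div_iff₀ hδp]
    nlinarith [hnn (1 - δ) hmem1]

lemma psi_zero {p κ : ℝ} {ψ : ℝ → ℝ} (hψ : AdmissiblePsi p κ ψ) : ψ 0 = 0 :=
  (hψ.2.2.2.1 0 ⟨le_refl 0, one_pos⟩).mpr rfl

lemma psi_nonneg {p κ : ℝ} {ψ : ℝ → ℝ} (hψ : AdmissiblePsi p κ ψ) {δ : ℝ}
    (h0 : 0 < δ) (h1 : δ ≤ 1) : 0 ≤ ψ (1 - δ) :=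
  hψ.2.2.1 (1 - δ) ⟨by linarith, by linarith⟩

lemma thetaE_le_one {p κ : ℝ} {ψ : ℝ → ℝ} (hψ : AdmissiblePsi p κ ψ) {s : ℝ} (hs : 0 ≤ s) :
    thetaE ψ s ≤ 1 := by
  have h := thetaE_le_up ψ hs one_pos le_rfl (psi_nonneg hψ one_pos le_rfl)
  calc thetaE ψ s ≤ ENNReal.ofReal ((1:ℝ)^2 + 1*s*ψ (1-1)) := h
    _ = 1 := by
        rw [show (1:ℝ) - 1 = 0 by norm_num, psi_zero hψ]
        norm_num

lemma thetaE_ne_top {p κ : ℝ} {ψ : ℝ → ℝ} (hψ : AdmissiblePsi p κ ψ) {s : ℝ} (hs : 0 ≤ s) :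
    thetaE ψ s ≠ ⊤ :=
  ne_top_of_le_ne_top (by norm_num) (thetaE_le_one hψ hs)

lemma thetaE_le_pow {p κ : ℝ} (hp : 1 < p) {ψ : ℝ → ℝ} (hψ : AdmissiblePsi p κ ψ)
    {C : ℝ} (hCpos : 0 < C) (hC : ∀ δ : ℝ, 0 < δ → δ ≤ 1 → ψ (1 - δ) ≤ C / δ ^ p)
    {s : ℝ} (hs : 0 < s) (hs1 : s ≤ 1) :
    thetaE ψ s ≤ ENNReal.ofReal ((1 + C) * s ^ (2/(p+1))) := by
  have hp1 : p + 1 ≠ 0 := by linarith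
  set q := 1/(p+1) with hq
  have hqpos : 0 < q := by rw [hq]; positivity
  set δ := s ^ q with hδ
  have hδpos : 0 < δ := Real.rpow_pos_of_pos hs q
  have hδ1 : δ ≤ 1 := Real.rpow_le_one hs.le hs1 hqpos.le
  have hδp : (0:ℝ) < δ ^ p := Real.rpow_pos_of_pos hδpos p
  have hE1 : δ^2 = s ^ (2/(p+1)) := by
    have h1 : δ^(2:ℕ) = δ ^ ((2:ℕ):ℝ) := (Real.rpow_natCast δ 2).symm
    rw [h1, hδ, ← Real.rpow_mul hs.le]
    norm_num
    rw [hq]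
    ring_nf
  have hE2 : δ * s * (C / δ ^ p) = C * s ^ (2/(p+1)) := by
    have h1 : δ / δ ^ p = δ ^ (1 - p) := by
      rw [Real.rpow_sub hδpos, Real.rpow_one]
    have h2 : δ ^ (1 - p) = s ^ (q * (1 - p)) := by
      rw [hδ, ← Real.rpow_mul hs.le]
    have h3 : s * s ^ (q * (1 - p)) = s ^ (1 + q * (1 - p)) := by
      rw [Real.rpow_add hs, Real.rpow_one]
    have h4 : (1:ℝ) + q * (1 - p) = 2/(p+1) := by
      rw [hq]; field_simp; ring
    calc δ * s * (C / δ ^ p) = C * (s * (δ / δ ^ p)) := by ring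
      _ = C * (s * s ^ (q * (1 - p))) := by rw [h1, h2]
      _ = C * s ^ (1 + q * (1 - p)) := by rw [h3]
      _ = C * s ^ (2/(p+1)) := by rw [h4]
  have hb := thetaE_le_up ψ hs.le hδpos hδ1 (psi_nonneg hψ hδpos hδ1)
  refine le_trans hb (ENNReal.ofReal_le_ofReal ?_)
  have hψb := hC δ hδpos hδ1
  have : δ * s * ψ (1 - δ) ≤ δ * s * (C / δ ^ p) :=
    mul_le_mul_of_nonneg_left hψb (mul_nonneg hδpos.le hs.le)
  rw [hE2] at this
  have h5 : (0:ℝ) ≤ s ^ (2/(p+1)) := Real.rpow_nonneg hs.le _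
  nlinarith [hE1]


/-- The surface energy density `θ_p` satisfies `θ_p(0) = 0`, is
nondecreasing and subadditive on `[0,∞)`, and there is a constant `c > 0`, depending
only on `ψ_p`, with `0 ≤ θ_p(s) ≤ min(1, c s^{2/(p+1)})` for all `s ≥ 0`. -/
theorem theta_basic_properties (p κ : ℝ) (hp : 1 < p) (hκ : 0 < κ)
    (ψ : ℝ → ℝ) (hψ : AdmissiblePsi p κ ψ) :
    theta ψ 0 = 0 ∧
    MonotoneOn (theta ψ) (Set.Ici 0) ∧
    (∀ s₁ s₂ : ℝ, 0 ≤ s₁ → 0 ≤ s₂ → theta ψ (s₁ + s₂) ≤ theta ψ s₁ + theta ψ s₂) ∧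
    ∃ c : ℝ, 0 < c ∧ ∀ s : ℝ, 0 ≤ s →
      0 ≤ theta ψ s ∧ theta ψ s ≤ min 1 (c * s ^ (2 / (p + 1))) := by
  obtain ⟨C, hCpos, hC⟩ := psi_bound hp hκ hψ
  refine ⟨?_, ?_, ?_, ?_⟩
  · rw [theta, thetaE_zero]; rfl
  · intro s₁ h₁ s₂ h₂ h12
    exact ENNReal.toReal_mono (thetaE_ne_top hψ h₂) (thetaE_mono ψ h₁ h12)
  · intro s₁ s₂ h₁ h₂
    have hne₁ := thetaE_ne_top hψ h₁
    have hne₂ := thetaE_ne_top hψ h₂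
    calc theta ψ (s₁ + s₂) ≤ (thetaE ψ s₁ + thetaE ψ s₂).toReal :=
          ENNReal.toReal_mono (by
            rw [ENNReal.add_ne_top]; exact ⟨hne₁, hne₂⟩) (thetaE_subadd ψ s₁ s₂)
      _ = theta ψ s₁ + theta ψ s₂ := ENNReal.toReal_add hne₁ hne₂
  · refine ⟨1 + C, by linarith, fun s hs => ?_⟩
    refine ⟨ENNReal.toReal_nonneg, le_min ?_ ?_⟩
    · exact ENNReal.toReal_le_of_le_ofReal zero_le_one
        (by rw [ENNReal.ofReal_one]; exact thetaE_le_one hψ hs)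
    · rcases eq_or_lt_of_le hs with h0 | h0
      · rw [theta, ← h0, thetaE_zero, Real.zero_rpow (by positivity : 2/(p+1) ≠ 0)]
        simp
      rcases le_or_gt s 1 with h1 | h1
      · exact ENNReal.toReal_le_of_le_ofReal (by positivity)
          (thetaE_le_pow hp hψ hCpos hC h0 h1)
      · have hle1 : theta ψ s ≤ 1 := ENNReal.toReal_le_of_le_ofReal zero_le_one
          (by rw [ENNReal.ofReal_one]; exact thetaE_le_one hψ hs)
        have hrp : (1:ℝ) ≤ s ^ (2/(p+1)) :=
          Real.one_le_rpow h1.le (by positivity)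
        nlinarith
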